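/- As p → 0+, the syndrome-class rate R(p,δp) = −(δp/(1−2p)) log₂(2^{h(p)} − 1) exceeds the location-encoding rate R₁(p,δp) = 2δp(1−h(p))/(1−2p), and as p → 1/2−, R(p,δp)/R₁(p,δp) → 1 (both rates tend to 0). -/

import Mathlib

open Filter

/-- The binary entropy `h(x) = −x log₂ x − (1−x) log₂ (1−x)`. -/
noncomputable def binEnt (x : ℝ) : ℝ :=
  -x * Real.logb 2 x - (1-x) * Real.logb 2 (1-x)

/-!
Write `f t = log₂ (2 ^ t - 1)`, so that the ratio is `-f (h p) / (2 (1 - h p))`.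
As `p → 0⁺`, `h p → 0⁺`, hence `f (h p) → -∞` while the denominator tends to `2`.
Since `f 1 = 0` and `f' 1 = 2`, near `t = 1` the ratio is half a difference quotient of `f`
at `1`, so it tends to `1` as `h p → 1⁻`. Both rates are multiples of difference quotients
at `1/2` of `f ∘ h` and of `h`, which tend to `0` because `h' (1/2) = 0`.
-/

open Real Set Topology

lemma binEnt_eq_binEntropy_div_log_two (x : ℝ) : binEnt x = binEntropy x / log 2 := by
  simp only [binEnt, binEntropy, logb, log_inv]
  ring

lemma continuous_binEnt : Continuous binEnt := by
  simpa only [← binEnt_eq_binEntropy_div_log_two] using binEntropy_continuous.div_const (log 2)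

lemma binEnt_half : binEnt (1 / 2) = 1 := by
  rw [binEnt_eq_binEntropy_div_log_two, one_div, binEntropy_two_inv,
    div_self (log_pos one_lt_two).ne']

lemma binEnt_pos {p : ℝ} (hp₀ : 0 < p) (hp₁ : p < 1) : 0 < binEnt p := by
  rw [binEnt_eq_binEntropy_div_log_two]
  exact div_pos (binEntropy_pos hp₀ hp₁) (log_pos one_lt_two)

lemma binEnt_lt_one {p : ℝ} (hp : p ≠ 1 / 2) : binEnt p < 1 := by
  rw [binEnt_eq_binEntropy_div_log_two, div_lt_one (log_pos one_lt_two), binEntropy_lt_log_two]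
  simpa using hp

lemma hasDerivAt_binEnt_half : HasDerivAt binEnt 0 (1 / 2) := by
  have h := (hasDerivAt_binEntropy (p := 1 / 2) (by norm_num) (by norm_num)).div_const (log 2)
  norm_num at h
  simpa only [← binEnt_eq_binEntropy_div_log_two] using h

lemma tendsto_binEnt_nhdsGT_zero : Tendsto binEnt (𝓝[>] 0) (𝓝[>] 0) := by
  refine tendsto_nhdsWithin_iff.2 ⟨?_, ?_⟩
  · convert continuous_binEnt.continuousWithinAt.tendsto using 2
    simp [binEnt]
  · filter_upwards [Ioo_mem_nhdsGT one_pos] with p hp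
    exact binEnt_pos hp.1 hp.2

lemma tendsto_binEnt_nhdsLT_half : Tendsto binEnt (𝓝[<] (1 / 2)) (𝓝[<] 1) := by
  refine tendsto_nhdsWithin_iff.2 ⟨?_, ?_⟩
  · simpa only [binEnt_half] using
      (continuous_binEnt.tendsto (1 / 2)).mono_left nhdsWithin_le_nhds
  · filter_upwards [self_mem_nhdsWithin] with p hp
    exact binEnt_lt_one hp.ne

lemma hasDerivAt_logb_two_rpow_sub_one : HasDerivAt (fun t : ℝ ↦ logb 2 (2 ^ t - 1)) 2 1 := by
  have h := ((((hasDerivAt_id (1 : ℝ)).const_rpow two_pos).sub_const 1).log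
    (by norm_num)).div_const (log 2)
  norm_num at h
  simpa [logb, (log_pos one_lt_two).ne'] using h

lemma tendsto_logb_two_rpow_sub_one_nhdsGT_zero :
    Tendsto (fun t : ℝ ↦ logb 2 (2 ^ t - 1)) (𝓝[>] 0) atBot := by
  refine (tendsto_logb_nhdsGT_zero one_lt_two).comp (tendsto_nhdsWithin_iff.2 ⟨?_, ?_⟩)
  · have : Continuous fun t : ℝ ↦ (2 : ℝ) ^ t - 1 :=
      (continuous_const_rpow two_ne_zero).sub continuous_const
    convert this.continuousWithinAt.tendsto using 2
    simp
  · filter_upwards [self_mem_nhdsWithin] with t ht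
    exact sub_pos.2 (one_lt_rpow one_lt_two ht)

lemma tendsto_neg_logb_two_rpow_sub_one_div_nhdsGT_zero :
    Tendsto (fun t : ℝ ↦ -logb 2 (2 ^ t - 1) / (2 * (1 - t))) (𝓝[>] 0) atTop := by
  have hden : Tendsto (fun t : ℝ ↦ (2 * (1 - t))⁻¹) (𝓝[>] 0) (𝓝 2⁻¹) := by
    have : ContinuousAt (fun t : ℝ ↦ (2 * (1 - t))⁻¹) 0 := by fun_prop (disch := norm_num)
    simpa using this.tendsto.mono_left nhdsWithin_le_nhds
  simpa only [div_eq_mul_inv, Function.comp_def] using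
    (tendsto_neg_atBot_atTop.comp tendsto_logb_two_rpow_sub_one_nhdsGT_zero).atTop_mul_pos
      (by norm_num) hden

lemma tendsto_neg_logb_two_rpow_sub_one_div_nhdsLT_one :
    Tendsto (fun t : ℝ ↦ -logb 2 (2 ^ t - 1) / (2 * (1 - t))) (𝓝[<] 1) (𝓝 1) := by
  have h := (hasDerivAt_logb_two_rpow_sub_one.tendsto_slope.div_const 2).mono_left
    (nhdsLT_le_nhdsNE 1)
  rw [div_self two_ne_zero] at h
  refine h.congr' (eventually_nhdsWithin_of_forall fun t ht ↦ ?_)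
  simp only [slope_def_field, rpow_one, show (2 : ℝ) - 1 = 1 by norm_num, logb_one, sub_zero]
  rw [← neg_sub t 1, mul_neg, div_neg, neg_div, neg_neg, div_div, mul_comm]

lemma HasDerivAt.tendsto_mul_sub_div_one_sub_two_mul {F : ℝ → ℝ}
    (hF : HasDerivAt F 0 (1 / 2)) (c : ℝ) :
    Tendsto (fun p ↦ c * (F (1 / 2) - F p) / (1 - 2 * p)) (𝓝[<] (1 / 2)) (𝓝 0) := by
  have h := (hF.tendsto_slope.const_mul (c / 2)).mono_left (nhdsLT_le_nhdsNE (1 / 2))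
  rw [mul_zero] at h
  refine h.congr' (eventually_nhdsWithin_of_forall fun p hp ↦ ?_)
  have hp : 1 - 2 * p ≠ 0 := by linarith [mem_Iio.1 hp]
  rw [slope_def_field, show p - 1 / 2 = -(1 - 2 * p) / 2 by ring]
  field_simp
  ring

theorem rate_comparison_general (δp : ℝ) :
    Tendsto
      (fun p : ℝ =>
        (-(Real.logb 2 ((2:ℝ) ^ (binEnt p) - 1))) / (2 * (1 - binEnt p)))
      (nhdsWithin 0 (Set.Ioi 0)) atTop ∧
    Tendsto
      (fun p : ℝ =>
        (-(Real.logb 2 ((2:ℝ) ^ (binEnt p) - 1))) / (2 * (1 - binEnt p)))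
      (nhdsWithin (1/2) (Set.Iio (1/2))) (nhds 1) ∧
    Tendsto
      (fun p : ℝ => -(δp/(1-2*p)) * Real.logb 2 ((2:ℝ) ^ (binEnt p) - 1))
      (nhdsWithin (1/2) (Set.Iio (1/2))) (nhds 0) ∧
    Tendsto
      (fun p : ℝ => 2*δp*(1 - binEnt p)/(1-2*p))
      (nhdsWithin (1/2) (Set.Iio (1/2))) (nhds 0) := by
  have hR : HasDerivAt (fun p ↦ logb 2 (2 ^ binEnt p - 1)) 0 (1 / 2) := by
    have h := hasDerivAt_logb_two_rpow_sub_one.comp_of_eq (1 / 2) hasDerivAt_binEnt_half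
      binEnt_half.symm
    rwa [mul_zero] at h
  refine ⟨tendsto_neg_logb_two_rpow_sub_one_div_nhdsGT_zero.comp tendsto_binEnt_nhdsGT_zero,
    tendsto_neg_logb_two_rpow_sub_one_div_nhdsLT_one.comp tendsto_binEnt_nhdsLT_half, ?_, ?_⟩
  · refine (hR.tendsto_mul_sub_div_one_sub_two_mul δp).congr fun p ↦ ?_
    simp only [binEnt_half, rpow_one, show (2 : ℝ) - 1 = 1 by norm_num, logb_one]
    ring
  · simpa only [binEnt_half] using
      hasDerivAt_binEnt_half.tendsto_mul_sub_div_one_sub_two_mul (2 * δp)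

/-- Comparison of the syndrome-class rate
`R(p,δp) = −(δp/(1−2p)) log₂(2^{h(p)} − 1)` with the location-encoding rate
`R₁(p,δp) = 2δp(1−h(p))/(1−2p)`: their ratio
`[−log₂(2^{h(p)}−1)] / [2(1−h(p))]` tends to `+∞` as `p → 0⁺` (so `R`
exceeds `R₁` for small `p`), tends to `1` as `p → 1/2⁻`, and both rates tend
to `0` as `p → 1/2⁻`. -/
theorem rate_comparison (δp : ℝ) (hδ : 0 < δp) :
    Tendsto
      (fun p : ℝ =>
        (-(Real.logb 2 ((2:ℝ) ^ (binEnt p) - 1))) / (2 * (1 - binEnt p)))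
      (nhdsWithin 0 (Set.Ioi 0)) atTop ∧
    Tendsto
      (fun p : ℝ =>
        (-(Real.logb 2 ((2:ℝ) ^ (binEnt p) - 1))) / (2 * (1 - binEnt p)))
      (nhdsWithin (1/2) (Set.Iio (1/2))) (nhds 1) ∧
    Tendsto
      (fun p : ℝ => -(δp/(1-2*p)) * Real.logb 2 ((2:ℝ) ^ (binEnt p) - 1))
      (nhdsWithin (1/2) (Set.Iio (1/2))) (nhds 0) ∧
    Tendsto
      (fun p : ℝ => 2*δp*(1 - binEnt p)/(1-2*p))
      (nhdsWithin (1/2) (Set.Iio (1/2))) (nhds 0) :=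
  rate_comparison_general δp
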